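/- SL^∞ is isomorphic to the ℓ^∞-direct sum (Σ_{k∈ℕ} SL^∞)_∞ of countably many copies of itself. -/

import Mathlib

/- Setup: dyadic intervals on [0,1), L^∞-normalized Haar coefficients, the SL^∞
square-function norm, the dyadic H^1 norm, and the L² pairing, all expressed on
the space `Dy → ℝ` of Haar coefficient sequences. -/

open MeasureTheory Filter ENNReal

noncomputable section

/-- Dyadic intervals, encoded as pairs (n, k) with k < 2^n. -/
abbrev Dy := {p : ℕ × ℕ // p.2 < 2 ^ p.1}

/-- The level (frequency) of a dyadic interval. -/
def dlev (I : Dy) : ℕ := I.val.1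

/-- The dyadic interval [k/2^n, (k+1)/2^n) as a subset of ℝ. -/
def dint (I : Dy) : Set ℝ :=
  Set.Ico ((I.val.2 : ℝ) / 2 ^ I.val.1) ((I.val.2 + 1 : ℝ) / 2 ^ I.val.1)

/-- The length |I| = 2^{-n} of a dyadic interval. -/
def dlen (I : Dy) : ℝ := ((2 : ℝ) ^ I.val.1)⁻¹

/-- The square function (Σ_I a_I² 1_I(x)) of the Haar series with coefficients `a`. -/
def sqFn (a : Dy → ℝ) (x : ℝ) : ℝ≥0∞ :=
  ∑' I : Dy, Set.indicator (dint I) (fun _ => ENNReal.ofReal ((a I) ^ 2)) x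

/-- The SL^∞ norm: ‖Σ a_I h_I‖ = sup_x (Σ a_I² 1_I(x))^{1/2}. -/
def slNorm (a : Dy → ℝ) : ℝ≥0∞ := ⨆ x : ℝ, sqFn a x ^ (1 / 2 : ℝ)

/-- The dyadic H^1 norm: ∫₀¹ (Σ a_I² 1_I(x))^{1/2} dx. -/
def h1Norm (a : Dy → ℝ) : ℝ≥0∞ := ∫⁻ x in Set.Ico (0 : ℝ) 1, sqFn a x ^ (1 / 2 : ℝ)

/-- The L² pairing ⟨f, g⟩ = Σ_I a_I b_I |I| of two Haar series. -/
def pairing (a b : Dy → ℝ) : ℝ := ∑' I : Dy, a I * b I * dlen I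

/-!
Every dyadic interval either belongs to the chain `[1 - 2⁻ᵗ, 1)` or lies in exactly one strip
`[1 - 2⁻ᵐ, 1 - 2⁻ᵐ⁻¹)`, and the intervals inside a strip form an affine copy of `𝒟`. At a point of
strip `m` the square function of a series is therefore the chain part plus the square function of
the `m`-th copy at the rescaled point. Hence a series whose chain coefficients are those of `g` and
whose strip copies all have norm at most `S` has norm at most `‖g‖ + S`, and every strip copy of a
series has norm at most that of the series. Placing component `0` of `(Σ SL^∞)_∞` on the chain and
the even strips and component `k + 1` on strip `2k + 1` relabels `𝒟` as `ℕ × 𝒟`, and the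
relabelling of coefficients is the isomorphism.
-/

namespace Dy

def root : Dy := ⟨(0, 0), by norm_num⟩

def leftChild (I : Dy) : Dy :=
  ⟨(I.1.1 + 1, I.1.2), by have := I.2; rw [pow_succ]; omega⟩

def rightChild (I : Dy) : Dy :=
  ⟨(I.1.1 + 1, I.1.2 + 2 ^ I.1.1), by have := I.2; rw [pow_succ]; omega⟩

/-- `chain t` is `[1 - 2⁻ᵗ, 1)`, and `strip m` maps `𝒟` onto the collection `𝒜_m` of dyadic
intervals inside `[1 - 2⁻ᵐ, 1 - 2⁻ᵐ⁻¹)`. -/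
def chain (t : ℕ) : Dy := rightChild^[t] root

def strip (m : ℕ) (I : Dy) : Dy := rightChild^[m] (leftChild I)

lemma chain_succ (t : ℕ) : chain (t + 1) = rightChild (chain t) :=
  Function.iterate_succ_apply' _ _ _

lemma strip_succ (m : ℕ) (I : Dy) : strip (m + 1) I = rightChild (strip m I) :=
  Function.iterate_succ_apply' _ _ _

def encode : ℕ ⊕ ℕ × Dy → Dy := Sum.elim chain fun p => strip p.1 p.2

def decodeAux : (n k : ℕ) → k < 2 ^ n → ℕ ⊕ ℕ × Dy
  | 0, _, _ => .inl 0
  | n + 1, k, h =>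
    if hk : k < 2 ^ n then .inr (0, ⟨(n, k), hk⟩)
    else Sum.map (· + 1) (Prod.map (· + 1) id)
      (decodeAux n (k - 2 ^ n) (by rw [pow_succ] at h; omega))

def decode (I : Dy) : ℕ ⊕ ℕ × Dy := decodeAux I.1.1 I.1.2 I.2

lemma decode_leftChild (I : Dy) : decode (leftChild I) = .inr (0, I) := by
  simp [decode, leftChild, decodeAux, I.2]

lemma decode_rightChild (I : Dy) :
    decode (rightChild I) = Sum.map (· + 1) (Prod.map (· + 1) id) (decode I) := by
  simp [decode, rightChild, decodeAux]

lemma encode_map_succ (z : ℕ ⊕ ℕ × Dy) :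
    encode (Sum.map (· + 1) (Prod.map (· + 1) id) z) = rightChild (encode z) := by
  rcases z with t | ⟨m, I⟩
  exacts [chain_succ t, strip_succ m I]

lemma encode_decode (I : Dy) : encode (decode I) = I := by
  obtain ⟨⟨n, k⟩, h⟩ := I
  induction n generalizing k with
  | zero =>
    obtain rfl : k = 0 := by simpa using h
    rfl
  | succ n ih =>
    by_cases hk : k < 2 ^ n
    · simp [decode, decodeAux, hk, encode, strip, leftChild]
    · have h' : k - 2 ^ n < 2 ^ n := by simp only at h; rw [pow_succ] at h; omega
      have hdec : decode ⟨(n + 1, k), h⟩ =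
          Sum.map (· + 1) (Prod.map (· + 1) id) (decode ⟨(n, k - 2 ^ n), h'⟩) := by
        simp [decode, decodeAux, hk]
      rw [hdec, encode_map_succ, ih]
      simp [rightChild, Nat.sub_add_cancel (not_lt.mp hk)]

lemma decode_encode (z : ℕ ⊕ ℕ × Dy) : decode (encode z) = z := by
  rcases z with t | ⟨m, I⟩
  · induction t with
    | zero => rfl
    | succ t ih =>
      simp only [encode, Sum.elim_inl, chain_succ, decode_rightChild] at ih ⊢
      rw [ih]
      rfl
  · induction m with
    | zero => exact decode_leftChild I
    | succ m ih =>
      simp only [encode, Sum.elim_inr, strip_succ, decode_rightChild] at ih ⊢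
      rw [ih]
      rfl

def stripEquiv : ℕ ⊕ ℕ × Dy ≃ Dy where
  toFun := encode
  invFun := decode
  left_inv := decode_encode
  right_inv := encode_decode

@[simp]
lemma stripEquiv_inl (t : ℕ) : stripEquiv (.inl t) = chain t := rfl

@[simp]
lemma stripEquiv_inr (m : ℕ) (I : Dy) : stripEquiv (.inr (m, I)) = strip m I := rfl

@[simp]
lemma stripEquiv_symm_chain (t : ℕ) : stripEquiv.symm (chain t) = .inl t :=
  stripEquiv.symm_apply_eq.2 rfl

@[simp]
lemma stripEquiv_symm_strip (m : ℕ) (I : Dy) : stripEquiv.symm (strip m I) = .inr (m, I) :=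
  stripEquiv.symm_apply_eq.2 rfl

/-- Component `0` occupies the chain and the even strips, component `k + 1` the strip `2k + 1`. -/
def blockEquiv : ℕ × Dy ≃ Dy :=
  ((Equiv.natEquivNatSumPUnit : ℕ ≃ ℕ ⊕ Unit).prodCongr (Equiv.refl Dy)).trans <|
  (Equiv.sumProdDistrib ℕ Unit Dy).trans <|
  (Equiv.sumCongr (Equiv.refl _) ((Equiv.punitProd Dy).trans stripEquiv.symm)).trans <|
  (Equiv.sumComm _ _).trans <| (Equiv.sumAssoc _ _ _).trans <|
  (Equiv.sumCongr (Equiv.refl ℕ) <| (Equiv.sumProdDistrib ℕ ℕ Dy).symm.trans <|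
    Equiv.natSumNatEquivNat.prodCongr (Equiv.refl Dy)).trans stripEquiv

lemma blockEquiv_zero_chain (t : ℕ) : blockEquiv (0, chain t) = chain t := by
  simp [blockEquiv, Equiv.natEquivNatSumPUnit]

lemma blockEquiv_zero_strip (m : ℕ) (I : Dy) : blockEquiv (0, strip m I) = strip (2 * m) I := by
  simp [blockEquiv, Equiv.natEquivNatSumPUnit]

lemma blockEquiv_succ (k : ℕ) (I : Dy) : blockEquiv (k + 1, I) = strip (2 * k + 1) I := by
  simp [blockEquiv, Equiv.natEquivNatSumPUnit]

lemma mem_dint_iff {I : Dy} {x : ℝ} :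
    x ∈ dint I ↔ (I.1.2 : ℝ) ≤ 2 ^ I.1.1 * x ∧ 2 ^ I.1.1 * x < I.1.2 + 1 := by
  have h : (0 : ℝ) < 2 ^ I.1.1 := by positivity
  rw [dint, Set.mem_Ico, div_le_iff₀ h, lt_div_iff₀ h, mul_comm x]

lemma dint_subset_Ico (I : Dy) : dint I ⊆ Set.Ico 0 1 := by
  intro x hx
  rw [mem_dint_iff] at hx
  have hk : (I.1.2 : ℝ) + 1 ≤ 2 ^ I.1.1 := by exact_mod_cast I.2
  constructor <;> nlinarith [I.1.2.cast_nonneg (α := ℝ), pow_pos (two_pos (α := ℝ)) I.1.1]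

lemma mem_dint_leftChild {I : Dy} {x : ℝ} : x ∈ dint (leftChild I) ↔ 2 * x ∈ dint I := by
  simp only [mem_dint_iff, leftChild, pow_succ, mul_assoc]

lemma mem_dint_rightChild {I : Dy} {x : ℝ} :
    x ∈ dint (rightChild I) ↔ 2 * x - 1 ∈ dint I := by
  simp only [mem_dint_iff, rightChild, pow_succ]
  push_cast
  constructor <;> rintro ⟨h₁, h₂⟩ <;> constructor <;> linarith

/-- The affine bijection taking `[1 - 2⁻ᵐ, 1 - 2⁻ᵐ⁻¹)` onto `[0, 1)`. -/
def localCoord (m : ℕ) (x : ℝ) : ℝ := 2 ^ (m + 1) * (x - 1) + 2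

lemma localCoord_surjective (m : ℕ) : Function.Surjective (localCoord m) := fun y =>
  ⟨(y - 2) / 2 ^ (m + 1) + 1, by simp [localCoord, mul_div_cancel₀]⟩

lemma dint_strip (m : ℕ) (I : Dy) : dint (strip m I) = localCoord m ⁻¹' dint I := by
  ext x
  induction m generalizing x with
  | zero =>
    rw [Set.mem_preimage, show localCoord 0 x = 2 * x by rw [localCoord]; ring]
    exact mem_dint_leftChild
  | succ m ih =>
    rw [strip_succ, mem_dint_rightChild, ih, Set.mem_preimage, Set.mem_preimage, localCoord,
      localCoord, pow_succ]
    ring_nf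

lemma localCoord_notMem_Ico_of_lt {m s : ℕ} {x : ℝ} (hms : m < s)
    (hm : localCoord m x ∈ Set.Ico 0 1) : localCoord s x ∉ Set.Ico 0 1 := by
  rintro ⟨hs, -⟩
  obtain ⟨-, hm⟩ := hm
  simp only [localCoord] at hm hs
  have hx : x - 1 < 0 := by nlinarith [pow_pos (two_pos (α := ℝ)) (m + 1)]
  have hpow : 2 * 2 ^ (m + 1) ≤ (2 : ℝ) ^ (s + 1) := by
    rw [← pow_succ']; exact pow_le_pow_right₀ one_le_two (by omega)
  nlinarith [mul_le_mul_of_nonpos_right hpow hx.le]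

lemma eq_of_localCoord_mem_Ico {m s : ℕ} {x : ℝ} (hm : localCoord m x ∈ Set.Ico 0 1)
    (hs : localCoord s x ∈ Set.Ico 0 1) : m = s := by
  rcases lt_trichotomy m s with h | h | h
  exacts [absurd hs (localCoord_notMem_Ico_of_lt h hm), h,
    absurd hm (localCoord_notMem_Ico_of_lt h hs)]

end Dy

open Dy

lemma sqFn_eq_zero_of_notMem {x : ℝ} (hx : x ∉ Set.Ico 0 1) (a : Dy → ℝ) : sqFn a x = 0 :=
  ENNReal.tsum_eq_zero.2 fun I => Set.indicator_of_notMem (fun h => hx (dint_subset_Ico I h)) _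

def chainSqFn (a : Dy → ℝ) (x : ℝ) : ℝ≥0∞ :=
  ∑' t, (dint (chain t)).indicator (fun _ => ENNReal.ofReal (a (chain t) ^ 2)) x

lemma sqFn_eq_chainSqFn_add_tsum (a : Dy → ℝ) (x : ℝ) :
    sqFn a x = chainSqFn a x + ∑' m, sqFn (a ∘ strip m) (localCoord m x) := by
  set g : Dy → ℝ≥0∞ := fun I => (dint I).indicator (fun _ => ENNReal.ofReal (a I ^ 2)) x
  have hstrip : ∀ m I, g (strip m I) =
      (dint I).indicator (fun _ => ENNReal.ofReal (a (strip m I) ^ 2)) (localCoord m x) := by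
    intro m I
    simp only [g, dint_strip]
    exact Set.indicator_comp_right (g := fun _ => ENNReal.ofReal (a (strip m I) ^ 2)) _
  calc sqFn a x = ∑' z, g (stripEquiv z) := (stripEquiv.tsum_eq g).symm
    _ = chainSqFn a x + ∑' p : ℕ × Dy, g (strip p.1 p.2) :=
      Summable.tsum_sum ENNReal.summable ENNReal.summable
    _ = _ := by rw [ENNReal.tsum_prod (f := fun m I => g (strip m I))]; simp only [hstrip]; rfl

lemma chainSqFn_le_sqFn (a : Dy → ℝ) (x : ℝ) : chainSqFn a x ≤ sqFn a x := by
  rw [sqFn_eq_chainSqFn_add_tsum a x]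
  exact le_self_add

lemma sqFn_comp_strip_le (a : Dy → ℝ) (m : ℕ) (x : ℝ) :
    sqFn (a ∘ strip m) (localCoord m x) ≤ sqFn a x := by
  rw [sqFn_eq_chainSqFn_add_tsum a x]
  exact (ENNReal.le_tsum m).trans le_add_self

/-- At most one strip meets a given point. -/
lemma tsum_sqFn_localCoord_le {x : ℝ} {c : ℝ≥0∞} (b : ℕ → Dy → ℝ)
    (h : ∀ m, sqFn (b m) (localCoord m x) ≤ c) : ∑' m, sqFn (b m) (localCoord m x) ≤ c := by
  by_cases hx : ∃ m, localCoord m x ∈ Set.Ico 0 1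
  · obtain ⟨m, hm⟩ := hx
    rw [tsum_eq_single m fun s hs => sqFn_eq_zero_of_notMem
      (fun hs' => hs (eq_of_localCoord_mem_Ico hs' hm)) _]
    exact h m
  · push Not at hx
    simp [sqFn_eq_zero_of_notMem (hx _)]

lemma slNorm_le_iff {a : Dy → ℝ} {c : ℝ≥0∞} : slNorm a ≤ c ↔ ∀ x, sqFn a x ≤ c ^ 2 := by
  simp only [slNorm, iSup_le_iff, one_div, ENNReal.rpow_inv_le_iff two_pos, ENNReal.rpow_two]

lemma sqFn_le_slNorm_sq (a : Dy → ℝ) (x : ℝ) : sqFn a x ≤ slNorm a ^ 2 :=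
  slNorm_le_iff.1 le_rfl x

lemma slNorm_comp_strip_le (a : Dy → ℝ) (m : ℕ) : slNorm (a ∘ strip m) ≤ slNorm a :=
  slNorm_le_iff.2 fun y => by
    obtain ⟨x, rfl⟩ := localCoord_surjective m y
    exact (sqFn_comp_strip_le a m x).trans (sqFn_le_slNorm_sq a x)

lemma slNorm_le_two_mul_of_strip_le {a b : Dy → ℝ} {S : ℝ≥0∞}
    (hchain : ∀ t, a (chain t) = b (chain t)) (hb : slNorm b ≤ S)
    (hstrip : ∀ m, slNorm (a ∘ strip m) ≤ S) : slNorm a ≤ 2 * S := by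
  refine slNorm_le_iff.2 fun x => ?_
  have hsq {c : Dy → ℝ} (hc : slNorm c ≤ S) (y : ℝ) : sqFn c y ≤ S ^ 2 :=
    (sqFn_le_slNorm_sq c y).trans (pow_le_pow_left' hc 2)
  calc sqFn a x = chainSqFn b x + ∑' m, sqFn (a ∘ strip m) (localCoord m x) := by
        rw [sqFn_eq_chainSqFn_add_tsum, chainSqFn, chainSqFn]
        simp only [hchain]
    _ ≤ S ^ 2 + S ^ 2 := add_le_add ((chainSqFn_le_sqFn b x).trans (hsq hb x))
        (tsum_sqFn_localCoord_le _ fun m => hsq (hstrip m) _)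
    _ ≤ (2 * S) ^ 2 := by
        rw [← two_mul, mul_pow]
        gcongr
        norm_num

def blockLinearEquiv : (Dy → ℝ) ≃ₗ[ℝ] (ℕ → Dy → ℝ) :=
  (LinearEquiv.funCongrLeft ℝ ℝ blockEquiv).trans (LinearEquiv.curry ℝ ℝ ℕ Dy)

lemma blockLinearEquiv_apply (f : Dy → ℝ) (k : ℕ) (I : Dy) :
    blockLinearEquiv f k I = f (blockEquiv (k, I)) := rfl

lemma blockLinearEquiv_symm_apply (F : ℕ → Dy → ℝ) (J : Dy) :
    blockLinearEquiv.symm F J = F (blockEquiv.symm J).1 (blockEquiv.symm J).2 := rfl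

lemma slNorm_blockLinearEquiv_le (f : Dy → ℝ) (k : ℕ) :
    slNorm (blockLinearEquiv f k) ≤ 2 * slNorm f := by
  cases k with
  | zero =>
    refine slNorm_le_two_mul_of_strip_le (b := f) (fun t => ?_) le_rfl fun m => ?_
    · rw [blockLinearEquiv_apply, blockEquiv_zero_chain]
    · have hcopy : blockLinearEquiv f 0 ∘ strip m = f ∘ strip (2 * m) := by
        ext I; simp [blockLinearEquiv_apply, blockEquiv_zero_strip]
      rw [hcopy]
      exact slNorm_comp_strip_le f _
  | succ k =>
    have hcopy : blockLinearEquiv f (k + 1) = f ∘ strip (2 * k + 1) := by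
      ext I; simp [blockLinearEquiv_apply, blockEquiv_succ]
    rw [hcopy]
    exact (slNorm_comp_strip_le f _).trans (le_mul_of_one_le_left' one_le_two)

lemma slNorm_blockLinearEquiv_symm_le (F : ℕ → Dy → ℝ) :
    slNorm (blockLinearEquiv.symm F) ≤ 2 * ⨆ k, slNorm (F k) := by
  have hF (k : ℕ) : slNorm (F k) ≤ ⨆ k, slNorm (F k) := le_iSup (fun k => slNorm (F k)) k
  refine slNorm_le_two_mul_of_strip_le (b := F 0) (fun t => ?_) (hF 0) fun m => ?_
  · rw [blockLinearEquiv_symm_apply, blockEquiv.symm_apply_eq.2 (blockEquiv_zero_chain t).symm]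
  · obtain ⟨j, rfl | rfl⟩ := Nat.even_or_odd' m
    · have hcopy : blockLinearEquiv.symm F ∘ strip (2 * j) = F 0 ∘ strip j := by
        ext I
        simp [blockLinearEquiv_symm_apply,
          blockEquiv.symm_apply_eq.2 (blockEquiv_zero_strip j I).symm]
      rw [hcopy]
      exact (slNorm_comp_strip_le _ _).trans (hF 0)
    · have hcopy : blockLinearEquiv.symm F ∘ strip (2 * j + 1) = F (j + 1) := by
        ext I
        simp [blockLinearEquiv_symm_apply, blockEquiv.symm_apply_eq.2 (blockEquiv_succ j I).symm]
      rw [hcopy]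
      exact hF _

/-- SL^∞ is isomorphic to the ℓ^∞-direct sum (Σ_{k∈ℕ} SL^∞)_∞ of
countably many copies of itself: there are mutually inverse bounded linear maps
between SL^∞ and the space of sequences (f_k) with sup_k ‖f_k‖_{SL^∞} < ∞. -/
theorem slinf_iso_ellinf_sum :
    ∃ (U : (Dy → ℝ) →ₗ[ℝ] (ℕ → Dy → ℝ)) (V : (ℕ → Dy → ℝ) →ₗ[ℝ] (Dy → ℝ))
      (c₁ c₂ : NNReal),
      (∀ f : Dy → ℝ, (⨆ k : ℕ, slNorm (U f k)) ≤ (c₁ : ℝ≥0∞) * slNorm f) ∧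
      (∀ F : ℕ → Dy → ℝ, slNorm (V F) ≤ (c₂ : ℝ≥0∞) * ⨆ k : ℕ, slNorm (F k)) ∧
      (∀ f : Dy → ℝ, slNorm f ≠ ⊤ → V (U f) = f) ∧
      (∀ F : ℕ → Dy → ℝ, (⨆ k : ℕ, slNorm (F k)) ≠ ⊤ → U (V F) = F) :=
  ⟨blockLinearEquiv, blockLinearEquiv.symm, 2, 2,
    fun f => iSup_le (slNorm_blockLinearEquiv_le f), slNorm_blockLinearEquiv_symm_le,
    fun f _ => blockLinearEquiv.symm_apply_apply f, fun F _ => blockLinearEquiv.apply_symm_apply F⟩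

end
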